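/- arXiv:2010.02292 — 2 statements merged into one kernel-verified Lean document; each statement's English description precedes it below -/
import Mathlib

section
/- Let B be a discrete valuation ring with uniformizer t, fraction field F = B[1/t], and let K be a subfield of B. Let D be a finite dimensional K-vector space with a decreasing, exhaustive, separated ℤ-indexed filtration Fil D. Then inside F ⊗_K D one has the equality of B-submodules: Σ_{n∈ℤ} tⁿB ⊗_K Fil₊⁻ⁿD = (Σ_{n∈ℤ} tⁿB ⊗_K Fil⁻ⁿD) + B ⊗_K D, where Fil₊⁻ⁿD = D for −n ≤ 0 and Fil₊⁻ⁿD = Fil⁻ⁿD for −n > 0. -/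
/-!
For `n ≥ 0` the lattice `tⁿB` lies in `B`, so `tⁿB ⊗ Fil₊⁻ⁿD = tⁿB ⊗ D ⊆ B ⊗ D`; for `n < 0` the
truncation does nothing, `Fil₊⁻ⁿD = Fil⁻ⁿD`. Conversely `tⁿB ⊗ Fil⁻ⁿD ⊆ tⁿB ⊗ Fil₊⁻ⁿD` always,
and `B ⊗ D` is the `n = 0` term of the left-hand side.
-/

namespace TensorProduct

variable {K B F D : Type*} [CommSemiring K] [CommSemiring B] [Semiring F]
  [Module K F] [Algebra B F] [SMulCommClass K B F]
  [AddCommMonoid D] [Module K D]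

def tmulSpan (I : Submodule B F) (P : Submodule K D) : Submodule B (F ⊗[K] D) :=
  Submodule.span B {z | ∃ (x : F) (d : D), x ∈ I ∧ d ∈ P ∧ z = x ⊗ₜ[K] d}

theorem tmulSpan_mono_right (I : Submodule B F) {P Q : Submodule K D} (hPQ : P ≤ Q) :
    tmulSpan I P ≤ tmulSpan I Q :=
  Submodule.span_mono fun _ ⟨x, d, hx, hd, hz⟩ => ⟨x, d, hx, hPQ hd, hz⟩

theorem algebraMap_tmul_eq_smul_one_tmul (b : B) (d : D) :
    algebraMap B F b ⊗ₜ[K] d = b • ((1 : F) ⊗ₜ[K] d) := by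
  rw [smul_tmul', Algebra.algebraMap_eq_smul_one]

theorem tmulSpan_le_span_one_tmul {I : Submodule B F} (hI : I ≤ 1) (P : Submodule K D) :
    tmulSpan I P ≤ Submodule.span B {z | ∃ d : D, z = (1 : F) ⊗ₜ[K] d} := by
  refine Submodule.span_le.2 ?_
  rintro _ ⟨x, d, hx, -, rfl⟩
  obtain ⟨b, rfl⟩ := Submodule.mem_one.1 (hI hx)
  rw [algebraMap_tmul_eq_smul_one_tmul]
  exact Submodule.smul_mem _ b (Submodule.subset_span ⟨d, rfl⟩)

theorem span_one_tmul_le_tmulSpan {I : Submodule B F} (hI : (1 : F) ∈ I) :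
    Submodule.span B {z | ∃ d : D, z = (1 : F) ⊗ₜ[K] d} ≤ tmulSpan I (⊤ : Submodule K D) :=
  Submodule.span_mono fun _ ⟨d, hz⟩ => ⟨1, d, hI, trivial, hz⟩

end TensorProduct

theorem Submodule.span_singleton_zpow_le_one {B F : Type*} [CommSemiring B] [DivisionRing F]
    [Algebra B F] (t : B) {n : ℤ} (hn : 0 ≤ n) :
    Submodule.span B {(algebraMap B F t) ^ n} ≤ 1 := by
  rw [Submodule.span_singleton_le_iff_mem, Submodule.mem_one]
  lift n to ℕ using hn
  exact ⟨t ^ n, by simp⟩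

open TensorProduct in
theorem stmt_5_general (K B F : Type*) [Field K] [CommRing B] [Field F] [Algebra B F] [Algebra K F]
    (t : B) (D : Type*) [AddCommGroup D] [Module K D]
    (Fil : ℤ → Submodule K D)
    (S Sp : ℤ → Submodule B (F ⊗[K] D)) (T : Submodule B (F ⊗[K] D))
    (hS : ∀ n : ℤ, S n = Submodule.span B
      {z | ∃ (x : F) (d : D), x ∈ Submodule.span B {(algebraMap B F t) ^ n} ∧
        d ∈ Fil (-n) ∧ z = x ⊗ₜ[K] d})
    (hSp : ∀ n : ℤ, Sp n = Submodule.span B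
      {z | ∃ (x : F) (d : D), x ∈ Submodule.span B {(algebraMap B F t) ^ n} ∧
        d ∈ (if -n ≤ 0 then ⊤ else Fil (-n)) ∧ z = x ⊗ₜ[K] d})
    (hT : T = Submodule.span B {z | ∃ d : D, z = (1 : F) ⊗ₜ[K] d}) :
    (⨆ n : ℤ, Sp n) = (⨆ n : ℤ, S n) ⊔ T := by
  change ∀ n, S n = tmulSpan _ _ at hS
  change ∀ n, Sp n = tmulSpan _ _ at hSp
  refine le_antisymm (iSup_le fun n => ?_) (sup_le (iSup_mono fun n => ?_) ?_)
  · rcases le_or_gt 0 n with hn | hn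
    · rw [hSp, hT]
      exact le_sup_of_le_right
        (tmulSpan_le_span_one_tmul (Submodule.span_singleton_zpow_le_one t hn) _)
    · rw [hSp, if_neg (by omega), ← hS]
      exact le_sup_of_le_left (le_iSup S n)
  · rw [hS, hSp]
    exact tmulSpan_mono_right _ (by split_ifs <;> simp)
  · rw [hT]
    refine le_iSup_of_le 0 ?_
    rw [hSp, neg_zero, if_pos le_rfl, zpow_zero]
    exact span_one_tmul_le_tmulSpan (Submodule.mem_span_singleton_self 1)

open TensorProduct in
/-- Lemma 2.1.6 abstracted: inside `F ⊗[K] D`, for a DVR `B` with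
uniformizer `t` and fraction field `F`, the sum of the `B`-submodules
`tⁿB ⊗ Fil₊⁻ⁿ D` equals the sum of the `tⁿB ⊗ Fil⁻ⁿ D` plus `B ⊗ D`. -/
theorem stmt_5 (K B F : Type*) [Field K] [CommRing B] [IsDomain B]
    [IsDiscreteValuationRing B] [Field F] [Algebra B F] [IsFractionRing B F]
    [Algebra K B] [Algebra K F] [IsScalarTower K B F]
    (t : B) (ht : Irreducible t)
    (D : Type*) [AddCommGroup D] [Module K D] [FiniteDimensional K D]
    (Fil : ℤ → Submodule K D)
    (hdec : ∀ n : ℤ, Fil (n + 1) ≤ Fil n)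
    (hexh : ⨆ n : ℤ, Fil n = ⊤)
    (hsep : ⨅ n : ℤ, Fil n = ⊥)
    (S Sp : ℤ → Submodule B (F ⊗[K] D)) (T : Submodule B (F ⊗[K] D))
    (hS : ∀ n : ℤ, S n = Submodule.span B
      {z | ∃ (x : F) (d : D), x ∈ Submodule.span B {(algebraMap B F t) ^ n} ∧
        d ∈ Fil (-n) ∧ z = x ⊗ₜ[K] d})
    (hSp : ∀ n : ℤ, Sp n = Submodule.span B
      {z | ∃ (x : F) (d : D), x ∈ Submodule.span B {(algebraMap B F t) ^ n} ∧
        d ∈ (if -n ≤ 0 then ⊤ else Fil (-n)) ∧ z = x ⊗ₜ[K] d})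
    (hT : T = Submodule.span B {z | ∃ d : D, z = (1 : F) ⊗ₜ[K] d}) :
    (⨆ n : ℤ, Sp n) = (⨆ n : ℤ, S n) ⊔ T :=
  stmt_5_general K B F t D Fil S Sp T hS hSp hT
end

section
/- (Topological snake lemma) Let A → B → C → 0 and 0 → A' → B' → C' be a commutative diagram of topological abelian groups and continuous homomorphisms α : A → A', β : B → B', γ : C → C', whose rows are exact as sequences of abelian groups. Assume the topology of C is the quotient topology from B and the topology of A' is the subspace topology from B'. Endow the kernels of α, β, γ with subspace topologies and the cokernels with quotient topologies. Then there is a connecting continuous homomorphism Ker(γ) → Coker(α) making the sequence Ker(α) → Ker(β) → Ker(γ) → Coker(α) → Coker(β) → Coker(γ) an exact sequence of abelian groups in which all maps are continuous. -/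
/-!
The maps induced on kernels and cokernels are continuous because kernels carry the subspace
and cokernels the quotient topology. For the connecting map, write `K = g⁻¹(ker γ)`; for
`b ∈ K` the element `β b` lies in `ker g' = f' A'`, and `δ (g b)` is the class of its
`f'`-preimage. The lift `K → A'` is continuous because `f'` is an embedding, so `δ` is
continuous as soon as the restriction `K → ker γ` of `g` is a quotient map. This holds because
a quotient homomorphism of topological groups is open, and an open quotient map restricts to a
quotient map over every subset.
-/

open Topology

theorem AddMonoidHom.isQuotientMap_addSubgroupComap {G H : Type*} [AddGroup G] [AddGroup H]
    [TopologicalSpace G] [ContinuousAdd G] [TopologicalSpace H] {φ : G →+ H}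
    (hφ : IsQuotientMap φ) (S : AddSubgroup H) : IsQuotientMap (φ.addSubgroupComap S) :=
  ((isOpenQuotientMap_of_isQuotientMap hφ).restrictPreimage (S : Set H)).isQuotientMap

namespace TopologicalSnake

variable {A B C A' B' C' : Type*} [AddCommGroup A] [AddCommGroup B] [AddCommGroup C]
  [AddCommGroup A'] [AddCommGroup B'] [AddCommGroup C']

section Square

variable (f : A →+ B) (f' : A' →+ B') (α : A →+ A') (β : B →+ B')
  (hcomm : ∀ a : A, β (f a) = f' (α a))

def kerMap : α.ker →+ β.ker :=
  (f.comp α.ker.subtype).codRestrict β.ker fun a => by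
    simp [AddMonoidHom.mem_ker, hcomm, AddMonoidHom.mem_ker.mp a.2]

def cokerMap : A' ⧸ α.range →+ B' ⧸ β.range :=
  QuotientAddGroup.map α.range β.range f' <| by
    rintro _ ⟨a, rfl⟩
    exact ⟨f a, hcomm a⟩

variable {f f' α β}

@[simp]
theorem coe_kerMap_apply (a : α.ker) : (kerMap f f' α β hcomm a : B) = f a := rfl

@[simp]
theorem cokerMap_mk (a' : A') :
    cokerMap f f' α β hcomm (a' : A' ⧸ α.range) = (f' a' : B' ⧸ β.range) :=
  QuotientAddGroup.map_mk _ _ _ _ a'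

theorem continuous_kerMap [TopologicalSpace A] [TopologicalSpace B] (hf : Continuous f) :
    Continuous (kerMap f f' α β hcomm) :=
  (hf.comp continuous_subtype_val).subtype_mk _

theorem continuous_cokerMap [TopologicalSpace A'] [TopologicalSpace B'] (hf' : Continuous f') :
    Continuous (cokerMap f f' α β hcomm) := by
  rw [(QuotientAddGroup.isQuotientMap_mk α.range).continuous_iff]
  exact QuotientAddGroup.continuous_mk.comp hf'

end Square

variable {f : A →+ B} {g : B →+ C} {f' : A' →+ B'} {g' : B' →+ C'}
  {α : A →+ A'} {β : B →+ B'} {γ : C →+ C'}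
  (hcomm1 : ∀ a : A, β (f a) = f' (α a)) (hcomm2 : ∀ b : B, γ (g b) = g' (β b))

theorem exact_kerMap (hrow1 : Function.Exact f g) (hf'inj : Function.Injective f') :
    Function.Exact (kerMap f f' α β hcomm1) (kerMap g g' β γ hcomm2) := by
  intro b
  constructor
  · intro hb
    obtain ⟨a, ha⟩ := (hrow1 b).mp (congrArg Subtype.val hb)
    have haker : α a = 0 := hf'inj <| by
      rw [← hcomm1, ha, AddMonoidHom.mem_ker.mp b.2, map_zero]
    exact ⟨⟨a, haker⟩, Subtype.ext ha⟩
  · rintro ⟨a, rfl⟩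
    exact Subtype.ext (hrow1.apply_apply_eq_zero (a : A))

theorem exact_cokerMap (hgsurj : Function.Surjective g) (hrow2 : Function.Exact f' g') :
    Function.Exact (cokerMap f f' α β hcomm1) (cokerMap g g' β γ hcomm2) := by
  intro y
  obtain ⟨b', rfl⟩ := QuotientAddGroup.mk_surjective y
  rw [cokerMap_mk, QuotientAddGroup.eq_zero_iff]
  constructor
  · rintro ⟨c, hc⟩
    obtain ⟨b, rfl⟩ := hgsurj c
    obtain ⟨a', ha'⟩ := (hrow2 (b' - β b)).mp (by rw [map_sub, ← hc, hcomm2, sub_self])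
    refine ⟨a', ?_⟩
    rw [cokerMap_mk, ha', QuotientAddGroup.eq_iff_sub_mem]
    simp
  · rintro ⟨x, hx⟩
    obtain ⟨a', rfl⟩ := QuotientAddGroup.mk_surjective x
    rw [cokerMap_mk, QuotientAddGroup.eq_iff_sub_mem] at hx
    obtain ⟨b, hb⟩ := hx
    refine ⟨g (-b), ?_⟩
    rw [hcomm2, map_neg, hb, neg_sub, map_sub, hrow2.apply_apply_eq_zero, sub_zero]

section Connecting

variable (hf'inj : Function.Injective f') (hrow2 : Function.Exact f' g')

noncomputable def connectingLift : γ.ker.comap g →+ A' :=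
  (AddMonoidHom.ofInjective hf'inj).symm.toAddMonoidHom.comp <|
    (β.comp (γ.ker.comap g).subtype).codRestrict f'.range fun b =>
      (hrow2 (β b)).mp (by rw [← hcomm2]; exact b.2)

theorem apply_connectingLift (b : γ.ker.comap g) :
    f' (connectingLift hcomm2 hf'inj hrow2 b) = β b :=
  congrArg Subtype.val ((AddMonoidHom.ofInjective hf'inj).apply_symm_apply _)

theorem connectingLift_eq_iff (b : γ.ker.comap g) (a' : A') :
    connectingLift hcomm2 hf'inj hrow2 b = a' ↔ β b = f' a' := by
  rw [← hf'inj.eq_iff, apply_connectingLift]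

variable (hrow1 : Function.Exact f g) (hgsurj : Function.Surjective g)

noncomputable def connecting : γ.ker →+ A' ⧸ α.range :=
  (g.addSubgroupComap γ.ker).liftOfSurjective
    (g.addSubgroupComap_surjective_of_surjective γ.ker hgsurj)
    ⟨(QuotientAddGroup.mk' α.range).comp (connectingLift hcomm2 hf'inj hrow2), fun b hb => by
      obtain ⟨a, ha⟩ := (hrow1 b).mp (congrArg Subtype.val hb)
      refine (QuotientAddGroup.eq_zero_iff _).mpr ⟨a, ?_⟩
      rw [eq_comm, connectingLift_eq_iff, ← ha, hcomm1]⟩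

theorem connecting_apply (b : γ.ker.comap g) :
    connecting hcomm1 hcomm2 hf'inj hrow2 hrow1 hgsurj (g.addSubgroupComap γ.ker b) =
      (connectingLift hcomm2 hf'inj hrow2 b : A' ⧸ α.range) :=
  AddMonoidHom.liftOfRightInverse_comp_apply _ _ _ _ b

theorem exact_kerMap_connecting :
    Function.Exact (kerMap g g' β γ hcomm2)
      (connecting hcomm1 hcomm2 hf'inj hrow2 hrow1 hgsurj) := by
  intro c
  obtain ⟨b, rfl⟩ := g.addSubgroupComap_surjective_of_surjective γ.ker hgsurj c
  rw [connecting_apply, QuotientAddGroup.eq_zero_iff]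
  constructor
  · rintro ⟨a, ha⟩
    have hker : β (b - f a) = 0 := by rw [map_sub, hcomm1, ha, apply_connectingLift, sub_self]
    refine ⟨⟨b - f a, hker⟩, Subtype.ext ?_⟩
    show g (b - f a) = g b
    rw [map_sub, hrow1.apply_apply_eq_zero, sub_zero]
  · rintro ⟨x, hx⟩
    obtain ⟨a, ha⟩ := (hrow1 (b - x)).mp <| by
      rw [map_sub, ← coe_kerMap_apply hcomm2, hx]
      exact sub_eq_zero.mpr rfl
    refine ⟨a, ((connectingLift_eq_iff hcomm2 hf'inj hrow2 b _).mpr ?_).symm⟩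
    rw [← hcomm1, ha, map_sub, AddMonoidHom.mem_ker.mp x.2, sub_zero]

theorem exact_connecting_cokerMap :
    Function.Exact (connecting hcomm1 hcomm2 hf'inj hrow2 hrow1 hgsurj)
      (cokerMap f f' α β hcomm1) := by
  intro y
  constructor
  · obtain ⟨a', rfl⟩ := QuotientAddGroup.mk_surjective y
    rw [cokerMap_mk, QuotientAddGroup.eq_zero_iff]
    rintro ⟨b, hb⟩
    have hbK : γ (g b) = 0 := by rw [hcomm2, hb, hrow2.apply_apply_eq_zero]
    refine ⟨g.addSubgroupComap γ.ker ⟨b, hbK⟩, ?_⟩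
    rw [connecting_apply, (connectingLift_eq_iff hcomm2 hf'inj hrow2 _ a').mpr hb]
  · rintro ⟨c, rfl⟩
    obtain ⟨b, rfl⟩ := g.addSubgroupComap_surjective_of_surjective γ.ker hgsurj c
    rw [connecting_apply, cokerMap_mk, apply_connectingLift, QuotientAddGroup.eq_zero_iff]
    exact ⟨b, rfl⟩

theorem continuous_connectingLift [TopologicalSpace B] [TopologicalSpace A'] [TopologicalSpace B']
    (hβ : Continuous β) (hf' : IsEmbedding f') :
    Continuous (connectingLift hcomm2 hf'.injective hrow2) := by
  rw [hf'.continuous_iff]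
  exact (hβ.comp continuous_subtype_val).congr fun b => (apply_connectingLift ..).symm

theorem continuous_connecting [TopologicalSpace B] [ContinuousAdd B] [TopologicalSpace C]
    [TopologicalSpace A'] [TopologicalSpace B'] (hβ : Continuous β) (hf' : IsEmbedding f')
    (hg : IsQuotientMap g) :
    Continuous (connecting hcomm1 hcomm2 hf'.injective hrow2 hrow1 hg.surjective) := by
  rw [(AddMonoidHom.isQuotientMap_addSubgroupComap hg γ.ker).continuous_iff]
  exact (QuotientAddGroup.continuous_mk.comp (continuous_connectingLift hcomm2 hrow2 hβ hf')).congr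
    fun b => (connecting_apply ..).symm

end Connecting

end TopologicalSnake

open TopologicalSnake

theorem stmt_13_general
    (A B C A' B' C' : Type*)
    [AddCommGroup A] [TopologicalSpace A]
    [AddCommGroup B] [TopologicalSpace B] [IsTopologicalAddGroup B]
    [AddCommGroup C] [TopologicalSpace C]
    [AddCommGroup A'] [TopologicalSpace A']
    [AddCommGroup B'] [TopologicalSpace B']
    [AddCommGroup C'] [TopologicalSpace C']
    (f : A →+ B) (g : B →+ C) (f' : A' →+ B') (g' : B' →+ C')
    (α : A →+ A') (β : B →+ B') (γ : C →+ C')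
    (hf : Continuous f) (hg' : Continuous g')
    (hβ : Continuous β)
    (hcomm1 : ∀ a : A, β (f a) = f' (α a))
    (hcomm2 : ∀ b : B, γ (g b) = g' (β b))
    (hrow1 : Function.Exact f g)
    (hrow2 : Function.Exact f' g')
    (hquot : Topology.IsQuotientMap g) (hemb : Topology.IsEmbedding f') :
    ∃ (k1 : α.ker →+ β.ker) (k2 : β.ker →+ γ.ker)
      (δ : γ.ker →+ A' ⧸ α.range)
      (c1 : A' ⧸ α.range →+ B' ⧸ β.range)
      (c2 : B' ⧸ β.range →+ C' ⧸ γ.range),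
      Continuous k1 ∧ Continuous k2 ∧ Continuous δ ∧ Continuous c1 ∧ Continuous c2 ∧
      (∀ a : α.ker, ((k1 a : B)) = f (a : A)) ∧
      (∀ b : β.ker, ((k2 b : C)) = g (b : B)) ∧
      (∀ a' : A', c1 (QuotientAddGroup.mk a') = QuotientAddGroup.mk (f' a')) ∧
      (∀ b' : B', c2 (QuotientAddGroup.mk b') = QuotientAddGroup.mk (g' b')) ∧
      Function.Exact k1 k2 ∧ Function.Exact k2 δ ∧
      Function.Exact δ c1 ∧ Function.Exact c1 c2 :=
  ⟨kerMap f f' α β hcomm1, kerMap g g' β γ hcomm2,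
    connecting hcomm1 hcomm2 hemb.injective hrow2 hrow1 hquot.surjective,
    cokerMap f f' α β hcomm1, cokerMap g g' β γ hcomm2,
    continuous_kerMap hcomm1 hf, continuous_kerMap hcomm2 hquot.continuous,
    continuous_connecting hcomm1 hcomm2 hrow2 hrow1 hβ hemb hquot,
    continuous_cokerMap hcomm1 hemb.continuous, continuous_cokerMap hcomm2 hg',
    coe_kerMap_apply hcomm1, coe_kerMap_apply hcomm2, cokerMap_mk hcomm1, cokerMap_mk hcomm2,
    exact_kerMap hcomm1 hcomm2 hrow1 hemb.injective,
    exact_kerMap_connecting hcomm1 hcomm2 hemb.injective hrow2 hrow1 hquot.surjective,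
    exact_connecting_cokerMap hcomm1 hcomm2 hemb.injective hrow2 hrow1 hquot.surjective,
    exact_cokerMap hcomm1 hcomm2 hquot.surjective hrow2⟩

/-- topological snake lemma: given a commutative diagram of
topological abelian groups with exact rows `A → B → C → 0` and `0 → A' → B' → C'`,
where `C` carries the quotient topology from `B` and `A'` the subspace topology
from `B'`, there is a six-term exact sequence of kernels and cokernels in which
all maps, including the connecting map, are continuous group homomorphisms. -/
theorem stmt_13
    (A B C A' B' C' : Type*)
    [AddCommGroup A] [TopologicalSpace A] [IsTopologicalAddGroup A]
    [AddCommGroup B] [TopologicalSpace B] [IsTopologicalAddGroup B]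
    [AddCommGroup C] [TopologicalSpace C] [IsTopologicalAddGroup C]
    [AddCommGroup A'] [TopologicalSpace A'] [IsTopologicalAddGroup A']
    [AddCommGroup B'] [TopologicalSpace B'] [IsTopologicalAddGroup B']
    [AddCommGroup C'] [TopologicalSpace C'] [IsTopologicalAddGroup C']
    (f : A →+ B) (g : B →+ C) (f' : A' →+ B') (g' : B' →+ C')
    (α : A →+ A') (β : B →+ B') (γ : C →+ C')
    (hf : Continuous f) (hg : Continuous g) (hf' : Continuous f') (hg' : Continuous g')
    (hα : Continuous α) (hβ : Continuous β) (hγ : Continuous γ)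
    (hcomm1 : ∀ a : A, β (f a) = f' (α a))
    (hcomm2 : ∀ b : B, γ (g b) = g' (β b))
    (hrow1 : Function.Exact f g) (hgsurj : Function.Surjective g)
    (hf'inj : Function.Injective f') (hrow2 : Function.Exact f' g')
    (hquot : Topology.IsQuotientMap g) (hemb : Topology.IsEmbedding f') :
    ∃ (k1 : α.ker →+ β.ker) (k2 : β.ker →+ γ.ker)
      (δ : γ.ker →+ A' ⧸ α.range)
      (c1 : A' ⧸ α.range →+ B' ⧸ β.range)
      (c2 : B' ⧸ β.range →+ C' ⧸ γ.range),
      Continuous k1 ∧ Continuous k2 ∧ Continuous δ ∧ Continuous c1 ∧ Continuous c2 ∧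
      (∀ a : α.ker, ((k1 a : B)) = f (a : A)) ∧
      (∀ b : β.ker, ((k2 b : C)) = g (b : B)) ∧
      (∀ a' : A', c1 (QuotientAddGroup.mk a') = QuotientAddGroup.mk (f' a')) ∧
      (∀ b' : B', c2 (QuotientAddGroup.mk b') = QuotientAddGroup.mk (g' b')) ∧
      Function.Exact k1 k2 ∧ Function.Exact k2 δ ∧
      Function.Exact δ c1 ∧ Function.Exact c1 c2 :=
  stmt_13_general A B C A' B' C' f g f' g' α β γ hf hg' hβ hcomm1 hcomm2 hrow1 hrow2 hquot hemb
end
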